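/- arXiv:1603.04005 — 4 statements merged into one kernel-verified Lean document; each statement's English description precedes it below -/
import Mathlib

section
/- For any two connected graphs G₁ and G₂, the distinguishing number of their join satisfies max{D(G₁), D(G₂)} ≤ D(G₁ + G₂) ≤ D(G₁) + D(G₂). -/
/-!
A distinguishing labelling of `G₁ + G₂` restricts to distinguishing labellings of `G₁` and `G₂`,
because every automorphism of one part extends by the identity on the other to an automorphism of
the join. Conversely, distinguishing labellings of `G₁` and `G₂` with disjoint palettes combine to a
labelling of the join whose label-preserving automorphisms must map each part onto itself; their
restrictions are then label-preserving automorphisms of `G₁` and `G₂`, hence trivial.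
-/

open SimpleGraph

/-- The join of two graphs: disjoint union plus all edges between the parts. -/
def joinGraph {V W : Type*} (G : SimpleGraph V) (H : SimpleGraph W) : SimpleGraph (V ⊕ W) where
  Adj x y :=
    match x, y with
    | Sum.inl a, Sum.inl b => G.Adj a b
    | Sum.inr a, Sum.inr b => H.Adj a b
    | Sum.inl _, Sum.inr _ => True
    | Sum.inr _, Sum.inl _ => True
  symm := by constructor; rintro (a|a) (b|b) h <;> first | exact h.symm | trivial
  loopless := by constructor; rintro (a|a) h <;> exact (SimpleGraph.irrefl _) h

instance joinGraphDecidableAdj {V W : Type*} {G : SimpleGraph V} {H : SimpleGraph W}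
    [DecidableRel G.Adj] [DecidableRel H.Adj] : DecidableRel (joinGraph G H).Adj
  | Sum.inl a, Sum.inl b => inferInstanceAs (Decidable (G.Adj a b))
  | Sum.inr a, Sum.inr b => inferInstanceAs (Decidable (H.Adj a b))
  | Sum.inl _, Sum.inr _ => Decidable.isTrue trivial
  | Sum.inr _, Sum.inl _ => Decidable.isTrue trivial

/-- The distinguishing number: least `d` admitting a vertex `d`-labeling preserved only by
the identity automorphism. -/
noncomputable def distinguishingNumber {V : Type*} (G : SimpleGraph V) : ℕ :=
  sInf {d : ℕ | ∃ c : V → Fin d, ∀ f : G ≃g G, (∀ v, c (f v) = c v) → ∀ v, f v = v}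

/-- The distinguishing index: least `d` admitting an edge `d`-labeling preserved only by
the identity automorphism. -/
noncomputable def distinguishingIndex {V : Type*} (G : SimpleGraph V) : ℕ :=
  sInf {d : ℕ | ∃ c : Sym2 V → Fin d, ∀ f : G ≃g G,
    (∀ e ∈ G.edgeSet, c (Sym2.map (⇑f) e) = c e) → ∀ v, f v = v}

/-- The non-neighborhood of a vertex. -/
def nonNbhd {V : Type*} (G : SimpleGraph V) (v : V) : Set V := {u | ¬ G.Adj v u}

/-- The k-fold join of a graph with itself. -/
def kJoin {V : Type*} (G : SimpleGraph V) (k : ℕ) : SimpleGraph (Fin k × V) where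
  Adj x y := x.1 ≠ y.1 ∨ (x.1 = y.1 ∧ G.Adj x.2 y.2)
  symm := by
    constructor
    rintro x y (h | ⟨h1, h2⟩)
    · exact Or.inl h.symm
    · exact Or.inr ⟨h1.symm, h2.symm⟩
  loopless := by
    constructor
    rintro x (h | ⟨h1, h2⟩)
    · exact h rfl
    · exact (SimpleGraph.irrefl _) h2

/-- `n` disjoint copies of `K₂`. -/
def nK2 (n : ℕ) : SimpleGraph (Fin n × Fin 2) where
  Adj x y := x.1 = y.1 ∧ x.2 ≠ y.2
  symm := by constructor; rintro x y ⟨h1, h2⟩; exact ⟨h1.symm, h2.symm⟩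
  loopless := by constructor; rintro x ⟨h1, h2⟩; exact h2 rfl

/-- The friendship graph `Fₙ`: the join of `K₁` with `n` copies of `K₂`. -/
def friendshipGraph (n : ℕ) : SimpleGraph (Fin 1 ⊕ (Fin n × Fin 2)) :=
  joinGraph (⊤ : SimpleGraph (Fin 1)) (nK2 n)

/-- A graph has a Hamiltonian path. -/
def HasHamiltonianPath {V : Type*} [DecidableEq V] (G : SimpleGraph V) : Prop :=
  ∃ (u v : V) (p : G.Walk u v), p.IsHamiltonian

namespace SimpleGraph

variable {V W V' W' : Type*} {G₁ : SimpleGraph V} {G₂ : SimpleGraph W}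
  {H₁ : SimpleGraph V'} {H₂ : SimpleGraph W'}

def IsDistinguishing {α : Type*} (G : SimpleGraph V) (c : V → α) : Prop :=
  ∀ f : G ≃g G, (∀ v, c (f v) = c v) → ∀ v, f v = v

def Iso.joinGraphCongr (e₁ : G₁ ≃g H₁) (e₂ : G₂ ≃g H₂) : joinGraph G₁ G₂ ≃g joinGraph H₁ H₂ where
  toEquiv := e₁.toEquiv.sumCongr e₂.toEquiv
  map_rel_iff' := by
    rintro (a | a) (b | b)
    exacts [e₁.map_rel_iff, Iff.rfl, Iff.rfl, e₂.map_rel_iff]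

section Restrict

variable (f : joinGraph G₁ G₂ ≃g joinGraph H₁ H₂)

def Iso.joinGraphRestrictInl (hf : ∀ x, (f x).isLeft = x.isLeft) : G₁ ≃g H₁ where
  toEquiv := Equiv.sumIsLeft.symm.trans
    ((f.toEquiv.subtypeEquiv fun x => by rw [← hf x]; rfl).trans Equiv.sumIsLeft)
  map_rel_iff' {a b} := by
    change (joinGraph H₁ H₂).Adj (Sum.inl _) (Sum.inl _) ↔
      (joinGraph G₁ G₂).Adj (Sum.inl a) (Sum.inl b)
    simp only [Equiv.trans_apply, Equiv.sumIsLeft_apply, Sum.inl_getLeft]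
    exact f.map_rel_iff

theorem Iso.inl_joinGraphRestrictInl (hf : ∀ x, (f x).isLeft = x.isLeft) (v : V) :
    Sum.inl (f.joinGraphRestrictInl hf v) = f (Sum.inl v) :=
  Sum.inl_getLeft _ _

def Iso.joinGraphRestrictInr (hf : ∀ x, (f x).isLeft = x.isLeft) : G₂ ≃g H₂ where
  toEquiv := Equiv.sumIsRight.symm.trans
    ((f.toEquiv.subtypeEquiv fun x => by
      rw [← Sum.bnot_isLeft, ← Sum.bnot_isLeft, ← hf x]; rfl).trans Equiv.sumIsRight)
  map_rel_iff' {a b} := by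
    change (joinGraph H₁ H₂).Adj (Sum.inr _) (Sum.inr _) ↔
      (joinGraph G₁ G₂).Adj (Sum.inr a) (Sum.inr b)
    simp only [Equiv.trans_apply, Equiv.sumIsRight_apply, Sum.inr_getRight]
    exact f.map_rel_iff

theorem Iso.inr_joinGraphRestrictInr (hf : ∀ x, (f x).isLeft = x.isLeft) (w : W) :
    Sum.inr (f.joinGraphRestrictInr hf w) = f (Sum.inr w) :=
  Sum.inr_getRight _ _

end Restrict

namespace IsDistinguishing

theorem of_injective {α : Type*} {G : SimpleGraph V} {c : V → α} (hc : c.Injective) :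
    G.IsDistinguishing c :=
  fun _ hf v => hc (hf v)

theorem comp_injective {α β : Type*} {G : SimpleGraph V} {c : V → α} (hc : G.IsDistinguishing c)
    {e : α → β} (he : e.Injective) : G.IsDistinguishing (e ∘ c) :=
  fun f hf => hc f fun v => he (hf v)

theorem comp_inl {α : Type*} {c : V ⊕ W → α} (hc : (joinGraph G₁ G₂).IsDistinguishing c) :
    G₁.IsDistinguishing (c ∘ Sum.inl) := fun f hf v =>
  Sum.inl_injective <| hc (Iso.joinGraphCongr f (Iso.refl : G₂ ≃g G₂))
    (by rintro (v | w); exacts [hf v, rfl]) (Sum.inl v)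

theorem comp_inr {α : Type*} {c : V ⊕ W → α} (hc : (joinGraph G₁ G₂).IsDistinguishing c) :
    G₂.IsDistinguishing (c ∘ Sum.inr) := fun f hf w =>
  Sum.inr_injective <| hc (Iso.joinGraphCongr (Iso.refl : G₁ ≃g G₁) f)
    (by rintro (v | w); exacts [rfl, hf w]) (Sum.inr w)

theorem sumMap {α β : Type*} {c₁ : V → α} {c₂ : W → β} (hc₁ : G₁.IsDistinguishing c₁)
    (hc₂ : G₂.IsDistinguishing c₂) : (joinGraph G₁ G₂).IsDistinguishing (Sum.map c₁ c₂) := by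
  intro f hf
  have hside : ∀ x, (f x).isLeft = x.isLeft := fun x => by
    rw [← Sum.isLeft_map c₁ c₂, hf, Sum.isLeft_map]
  have h₁ : ∀ v, f.joinGraphRestrictInl hside v = v := hc₁ _ fun v => Sum.inl_injective <| by
    rw [← Sum.map_inl c₁ c₂, Iso.inl_joinGraphRestrictInl, hf, Sum.map_inl]
  have h₂ : ∀ w, f.joinGraphRestrictInr hside w = w := hc₂ _ fun w => Sum.inr_injective <| by
    rw [← Sum.map_inr c₁ c₂, Iso.inr_joinGraphRestrictInr, hf, Sum.map_inr]
  rintro (v | w)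
  · rw [← Iso.inl_joinGraphRestrictInl f hside, h₁]
  · rw [← Iso.inr_joinGraphRestrictInr f hside, h₂]

theorem distinguishingNumber_le {d : ℕ} {G : SimpleGraph V} {c : V → Fin d}
    (hc : G.IsDistinguishing c) : distinguishingNumber G ≤ d :=
  Nat.sInf_le ⟨c, hc⟩

end IsDistinguishing

theorem exists_isDistinguishing_fin_distinguishingNumber [Finite V] (G : SimpleGraph V) :
    ∃ c : V → Fin (distinguishingNumber G), G.IsDistinguishing c :=
  Nat.sInf_mem (s := {d | ∃ c : V → Fin d, G.IsDistinguishing c})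
    ⟨Nat.card V, Finite.equivFin V, .of_injective (Finite.equivFin V).injective⟩

end SimpleGraph

theorem join_distinguishingNumber_bounds_general {V W : Type*} [Fintype V] [Fintype W]
    (G₁ : SimpleGraph V) (G₂ : SimpleGraph W) :
    max (distinguishingNumber G₁) (distinguishingNumber G₂)
        ≤ distinguishingNumber (joinGraph G₁ G₂) ∧
    distinguishingNumber (joinGraph G₁ G₂)
        ≤ distinguishingNumber G₁ + distinguishingNumber G₂ := by
  obtain ⟨c, hc⟩ := exists_isDistinguishing_fin_distinguishingNumber (joinGraph G₁ G₂)
  obtain ⟨c₁, hc₁⟩ := exists_isDistinguishing_fin_distinguishingNumber G₁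
  obtain ⟨c₂, hc₂⟩ := exists_isDistinguishing_fin_distinguishingNumber G₂
  exact ⟨max_le hc.comp_inl.distinguishingNumber_le hc.comp_inr.distinguishingNumber_le,
    ((hc₁.sumMap hc₂).comp_injective finSumFinEquiv.injective).distinguishingNumber_le⟩

theorem join_distinguishingNumber_bounds {V W : Type*} [Fintype V] [Fintype W]
    (G₁ : SimpleGraph V) (G₂ : SimpleGraph W)
    (h₁ : G₁.Connected) (h₂ : G₂.Connected) :
    max (distinguishingNumber G₁) (distinguishingNumber G₂)
        ≤ distinguishingNumber (joinGraph G₁ G₂) ∧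
    distinguishingNumber (joinGraph G₁ G₂)
        ≤ distinguishingNumber G₁ + distinguishingNumber G₂ :=
  join_distinguishingNumber_bounds_general G₁ G₂
end

section
/- For any graph G, D(G) ≤ D(G + G), where G + G is the join of G with a disjoint copy of itself. -/
open SimpleGraph

/-! A distinguishing colouring `c` of `G` gives the distinguishing colouring `c ⊕ c` of `G + G`
with twice as many colours: an automorphism preserving it preserves the two sides, hence restricts
to colour-preserving automorphisms of the two copies of `G`. Conversely, the restriction of a
distinguishing colouring of `G + G` to the left copy distinguishes `G`, since every automorphism
of `G` extends to `G + G` by the identity on the right copy. -/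

section

variable {V W V' W' : Type*} {G : SimpleGraph V} {H : SimpleGraph W}
  {G' : SimpleGraph V'} {H' : SimpleGraph W'}

def IsDistinguishingColoring (G : SimpleGraph V) {α : Type*} (c : V → α) : Prop :=
  ∀ f : G ≃g G, (∀ v, c (f v) = c v) → ∀ v, f v = v

lemma distinguishingNumber_eq_sInf (G : SimpleGraph V) :
    distinguishingNumber G = sInf {d | ∃ c : V → Fin d, IsDistinguishingColoring G c} :=
  rfl

lemma IsDistinguishingColoring.comp_injective {α β : Type*} {c : V → α}
    (hc : IsDistinguishingColoring G c) {e : α → β} (he : Function.Injective e) :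
    IsDistinguishingColoring G (e ∘ c) :=
  fun f hf => hc f fun v => he (hf v)

namespace joinGraph

def isoSumCongr (f : G ≃g G') (g : H ≃g H') :
    joinGraph G H ≃g joinGraph G' H' where
  toEquiv := f.toEquiv.sumCongr g.toEquiv
  map_rel_iff' := by
    rintro (a | a) (b | b)
    exacts [f.map_adj_iff, Iff.rfl, Iff.rfl, g.map_adj_iff]

variable (f : joinGraph G H ≃g joinGraph G' H') (hf : ∀ x, (f x).isLeft = x.isLeft)
include hf

def isoRestrictLeft : G ≃g G' where
  toEquiv := Equiv.sumIsLeft.symm.trans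
    ((f.toEquiv.subtypeEquiv fun x => by simp [hf]).trans Equiv.sumIsLeft)
  map_rel_iff' {a b} := by
    change (joinGraph G' H').Adj (.inl _) (.inl _) ↔ (joinGraph G H).Adj (.inl a) (.inl b)
    simp only [Equiv.trans_apply, Equiv.sumIsLeft_apply, Equiv.subtypeEquiv_apply,
      Equiv.sumIsLeft_symm_apply_coe, Sum.inl_getLeft]
    exact f.map_adj_iff

def isoRestrictRight : H ≃g H' where
  toEquiv := Equiv.sumIsRight.symm.trans
    ((f.toEquiv.subtypeEquiv fun x => by
      rw [← Sum.not_isLeft, ← Sum.not_isLeft, ← hf x]; rfl).trans Equiv.sumIsRight)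
  map_rel_iff' {a b} := by
    change (joinGraph G' H').Adj (.inr _) (.inr _) ↔ (joinGraph G H).Adj (.inr a) (.inr b)
    simp only [Equiv.trans_apply, Equiv.sumIsRight_apply, Equiv.subtypeEquiv_apply,
      Equiv.sumIsRight_symm_apply_coe, Sum.inr_getRight]
    exact f.map_adj_iff

lemma inl_isoRestrictLeft (v : V) : .inl (isoRestrictLeft f hf v) = f (.inl v) :=
  Sum.inl_getLeft _ _

lemma inr_isoRestrictRight (w : W) : .inr (isoRestrictRight f hf w) = f (.inr w) :=
  Sum.inr_getRight _ _

end joinGraph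

lemma IsDistinguishingColoring.comp_inl {α : Type*} {c : V ⊕ W → α}
    (hc : IsDistinguishingColoring (joinGraph G H) c) :
    IsDistinguishingColoring G (c ∘ Sum.inl) := fun f hf v =>
  Sum.inl_injective <|
    hc (joinGraph.isoSumCongr f (Iso.refl (G := H))) (by rintro (u | u); exacts [hf u, rfl])
      (.inl v)

lemma IsDistinguishingColoring.sumMap {α β : Type*} {c : V → α} {c' : W → β}
    (hc : IsDistinguishingColoring G c) (hc' : IsDistinguishingColoring H c') :
    IsDistinguishingColoring (joinGraph G H) (Sum.map c c') := by
  intro f hf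
  have hside : ∀ x, (f x).isLeft = x.isLeft := fun x => by
    simpa using congrArg Sum.isLeft (hf x)
  have hleft := hc (joinGraph.isoRestrictLeft f hside) fun v => by
    simpa [← joinGraph.inl_isoRestrictLeft f hside] using hf (.inl v)
  have hright := hc' (joinGraph.isoRestrictRight f hside) fun w => by
    simpa [← joinGraph.inr_isoRestrictRight f hside] using hf (.inr w)
  rintro (v | w)
  · rw [← joinGraph.inl_isoRestrictLeft f hside, hleft]
  · rw [← joinGraph.inr_isoRestrictRight f hside, hright]

end

theorem distinguishingNumber_le_join_self {V : Type*} (G : SimpleGraph V) :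
    distinguishingNumber G ≤ distinguishingNumber (joinGraph G G) := by
  rw [distinguishingNumber_eq_sInf, distinguishingNumber_eq_sInf]
  rcases Set.eq_empty_or_nonempty {d | ∃ c : V → Fin d, IsDistinguishingColoring G c} with
    hG | ⟨d, c, hc⟩
  · simp [hG]
  · have hjoin : d + d ∈ {d | ∃ c : V ⊕ V → Fin d,
        IsDistinguishingColoring (joinGraph G G) c} :=
      ⟨_, (hc.sumMap hc).comp_injective finSumFinEquiv.injective⟩
    obtain ⟨c', hc'⟩ := Nat.sInf_mem ⟨_, hjoin⟩
    exact Nat.sInf_le ⟨_, hc'.comp_inl⟩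
end

section
/- Every graph G of order n ≥ 7 that has a Hamiltonian path satisfies D'(G) ≤ 2. -/
open SimpleGraph

/-!
Number the vertices `0, …, n - 1` along the Hamiltonian path. An edge colouring with two colours
is a set of red edges, and it is distinguishing when the identity is the only automorphism of `G`
preserving the red edges.

If the red edges form the whole path, such an automorphism is the identity or the reversal
`i ↦ n - 1 - i`; if they form the path `1, …, n - 1`, it fixes the isolated vertex `0` and is the
identity or `i ↦ -i (mod n)`. So we are done unless both maps are automorphisms of `G`; then so is
their product, the rotation `i ↦ i + 1`, and `G` is a circulant graph on the cycle `0, 1, …, n - 1`.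
If `G` has chords of length `3`, the path `0, …, n - 2` with the chord `{n - 4, n - 1}` is a spider
with legs `n - 4`, `2`, `1`, which has no nontrivial automorphism. If `G` has chords of length `2`
but not `3`, then `1, 0, 2, 3, …, n - 1` is a Hamiltonian path whose reversal maps the edge `{1, 3}`
to the non-edge `{n - 1, n - 4}`. Otherwise colour the edge `{0, 1}` and the path `2, …, n - 2`:
the only isolated red vertex `n - 1` is not adjacent to the red leaves `1` and `2`, and this pins
down the leaves `0` and `n - 2`, hence everything.
-/

structure IsAutOn (n : ℕ) (R : ℕ → ℕ → Prop) (π : ℕ → ℕ) : Prop where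
  mapsTo : Set.MapsTo π (Set.Iio n) (Set.Iio n)
  injOn : Set.InjOn π (Set.Iio n)
  rel_iff : ∀ i < n, ∀ j < n, R (π i) (π j) ↔ R i j

namespace IsAutOn

variable {n : ℕ} {R Q : ℕ → ℕ → Prop} {π s : ℕ → ℕ} {i j : ℕ}

lemma lt (h : IsAutOn n R π) (hi : i < n) : π i < n := h.mapsTo hi

lemma eq_iff (h : IsAutOn n R π) (hi : i < n) (hj : j < n) : π i = π j ↔ i = j :=
  ⟨fun e => h.injOn hi hj e, congrArg π⟩

lemma rel (h : IsAutOn n R π) (hi : i < n) (hj : j < n) (hij : R i j) : R (π i) (π j) :=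
  (h.rel_iff i hi j hj).2 hij

lemma exists_eq (h : IsAutOn n R π) (hj : j < n) : ∃ i < n, π i = j :=
  (((Set.finite_Iio n).injOn_iff_bijOn_of_mapsTo h.mapsTo).1 h.injOn).surjOn hj

lemma of_rel_iff (h : IsAutOn n R π) (hRQ : ∀ i < n, ∀ j < n, R i j ↔ Q i j) :
    IsAutOn n Q π where
  mapsTo := h.mapsTo
  injOn := h.injOn
  rel_iff i hi j hj := by rw [← hRQ _ (h.lt hi) _ (h.lt hj), ← hRQ i hi j hj, h.rel_iff i hi j hj]

lemma conj (hs : ∀ i < n, s i < n) (hss : ∀ i < n, s (s i) = i)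
    (h : IsAutOn n (fun i j => R (s i) (s j)) π) : IsAutOn n R (s ∘ π ∘ s) where
  mapsTo i hi := hs _ (h.lt (hs i hi))
  injOn i hi j hj e := by
    have e' := congrArg s e
    simp only [Function.comp, hss _ (h.lt (hs i hi)), hss _ (h.lt (hs j hj))] at e'
    rw [← hss i hi, ← hss j hj, (h.eq_iff (hs i hi) (hs j hj)).1 e']
  rel_iff i hi j hj := by
    simpa only [Function.comp, hss i hi, hss j hj] using h.rel_iff (s i) (hs i hi) (s j) (hs j hj)

end IsAutOn

structure IsDistinguishingOn (n : ℕ) (A R : ℕ → ℕ → Prop) : Prop where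
  symm : ∀ i j, R i j → R j i
  le : ∀ i < n, ∀ j < n, R i j → A i j
  eq_self : ∀ π, IsAutOn n A π → IsAutOn n R π → ∀ i < n, π i = i

lemma IsDistinguishingOn.of_involution {n : ℕ} {A R : ℕ → ℕ → Prop} {s : ℕ → ℕ}
    (hs : ∀ i < n, s i < n) (hss : ∀ i < n, s (s i) = i)
    (h : IsDistinguishingOn n (fun i j => A (s i) (s j)) R) :
    IsDistinguishingOn n A (fun i j => R (s i) (s j)) where
  symm _ _ := h.symm _ _
  le i hi j hj hR := by simpa only [hss i hi, hss j hj] using h.le _ (hs i hi) _ (hs j hj) hR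
  eq_self π hA hR i hi := by
    have hA' : IsAutOn n (fun i j => A (s (s i)) (s (s j))) π :=
      hA.of_rel_iff fun i hi j hj => by rw [hss i hi, hss j hj]
    have hfix := h.eq_self _ (hA'.conj hs hss) (hR.conj hs hss) (s i) (hs i hi)
    simp only [Function.comp, hss i hi] at hfix
    rw [← hss (π i) (hA.lt hi), hfix, hss i hi]

section Transport

variable {V : Type*} {G : SimpleGraph V}

lemma distinguishingIndex_le_two_of_forall_preserves (S : Set (Sym2 V))
    (hS : ∀ f : G ≃g G, (∀ e ∈ G.edgeSet, Sym2.map f e ∈ S ↔ e ∈ S) → ∀ v, f v = v) :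
    distinguishingIndex G ≤ 2 := by
  classical
  refine Nat.sInf_le ⟨fun e => if e ∈ S then 0 else 1, fun f hf => hS f fun e he => ?_⟩
  have := hf e he
  by_cases h1 : Sym2.map f e ∈ S <;> by_cases h2 : e ∈ S <;> simp_all

theorem distinguishingIndex_le_two_of_isDistinguishingOn {n : ℕ} {w : ℕ → V}
    (hw : Set.BijOn w (Set.Iio n) Set.univ) {R : ℕ → ℕ → Prop}
    (hR : IsDistinguishingOn n (fun i j => G.Adj (w i) (w j)) R) : distinguishingIndex G ≤ 2 := by
  set S : Set (Sym2 V) := {e | ∃ i < n, ∃ j < n, R i j ∧ e = s(w i, w j)}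
  have hmemS : ∀ i < n, ∀ j < n, s(w i, w j) ∈ S ↔ R i j := fun i hi j hj => by
    refine ⟨fun ⟨i', hi', j', hj', hR', he⟩ => ?_, fun h => ⟨i, hi, j, hj, h, rfl⟩⟩
    rcases Sym2.eq_iff.1 he with ⟨e1, e2⟩ | ⟨e1, e2⟩
    · rwa [hw.injOn hi hi' e1, hw.injOn hj hj' e2]
    · exact hR.symm _ _ (by rwa [hw.injOn hi hj' e1, hw.injOn hj hi' e2])
  refine distinguishingIndex_le_two_of_forall_preserves S fun f hf => ?_
  choose π hπn hπw using fun i => hw.surjOn (Set.mem_univ (f (w i)))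
  have hAdj : ∀ i j, G.Adj (w (π i)) (w (π j)) ↔ G.Adj (w i) (w j) := fun i j => by
    rw [hπw, hπw, f.map_adj_iff]
  have hmapsTo : Set.MapsTo π (Set.Iio n) (Set.Iio n) := fun i _ => hπn i
  have hinjOn : Set.InjOn π (Set.Iio n) := fun i hi j hj e =>
    hw.injOn hi hj (f.injective (by rw [← hπw, ← hπw, e]))
  have hRπ : IsAutOn n R π := ⟨hmapsTo, hinjOn, fun i hi j hj => by
    by_cases hadj : G.Adj (w i) (w j)
    · rw [← hmemS _ (hπn i) _ (hπn j), ← hmemS i hi j hj, ← hf _ (G.mem_edgeSet.2 hadj),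
        Sym2.map_mk, hπw, hπw]
    · exact iff_of_false (fun h => hadj ((hAdj i j).1 (hR.le _ (hπn i) _ (hπn j) h)))
        (fun h => hadj (hR.le i hi j hj h))⟩
  intro v
  obtain ⟨i, hi, rfl⟩ := hw.surjOn (Set.mem_univ v)
  rw [← hπw, hR.eq_self π ⟨hmapsTo, hinjOn, fun i _ j _ => hAdj i j⟩ hRπ i hi]

lemma SimpleGraph.Walk.IsHamiltonian.bijOn_getVert [Fintype V] [DecidableEq V] {u v : V}
    {p : G.Walk u v} (hp : p.IsHamiltonian) :
    Set.BijOn p.getVert (Set.Iio (Fintype.card V)) Set.univ := by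
  have hlen := hp.length_eq
  have hcard : 0 < Fintype.card V := Fintype.card_pos_iff.2 ⟨u⟩
  refine ⟨Set.mapsTo_univ _ _, hp.isPath.getVert_injOn.mono fun i hi => ?_, fun x _ => ?_⟩
  · simp only [Set.mem_Iio, Set.mem_ofPred_eq] at hi ⊢
    omega
  · obtain ⟨i, rfl, hi⟩ := SimpleGraph.Walk.mem_support_iff_exists_getVert.1 (hp.mem_support x)
    exact ⟨i, by simp only [Set.mem_Iio]; omega, rfl⟩

end Transport

noncomputable def degOn (n : ℕ) (R : ℕ → ℕ → Prop) (b : ℕ) : ℕ := {z | z < n ∧ R b z}.ncard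

section Degrees

variable {n : ℕ} {R : ℕ → ℕ → Prop} {π : ℕ → ℕ} {b : ℕ}

lemma IsAutOn.degOn_eq (h : IsAutOn n R π) (hb : b < n) : degOn n R (π b) = degOn n R b := by
  have himage : π '' {z | z < n ∧ R b z} = {z | z < n ∧ R (π b) z} := by
    ext z
    constructor
    · rintro ⟨y, ⟨hy, hby⟩, rfl⟩
      exact ⟨h.lt hy, h.rel hb hy hby⟩
    · rintro ⟨hz, hbz⟩
      obtain ⟨y, hy, rfl⟩ := h.exists_eq hz
      exact ⟨y, ⟨hy, (h.rel_iff b hb y hy).1 hbz⟩, rfl⟩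
  rw [degOn, degOn, ← himage, (h.injOn.mono fun z hz => hz.1).ncard_image]

lemma degOn_eq_zero (h : ∀ z < n, ¬ R b z) : degOn n R b = 0 := by
  have hempty : {z | z < n ∧ R b z} = (∅ : Set ℕ) :=
    Set.eq_empty_iff_forall_notMem.2 fun z hz => h z hz.1 hz.2
  rw [degOn, hempty, Set.ncard_empty]

lemma degOn_ne_zero {z : ℕ} (hz : z < n) (hbz : R b z) : degOn n R b ≠ 0 :=
  ((Set.ncard_pos ((Set.finite_Iio n).subset fun _ hz => hz.1)).2
    (⟨z, hz, hbz⟩ : {z | z < n ∧ R b z}.Nonempty)).ne'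

lemma degOn_eq_one {c : ℕ} (h : ∀ z, z < n ∧ R b z ↔ z = c) : degOn n R b = 1 :=
  Set.ncard_eq_one.2 ⟨c, Set.ext h⟩

lemma degOn_eq_two {c d : ℕ} (hcd : c ≠ d) (h : ∀ z, z < n ∧ R b z ↔ z = c ∨ z = d) :
    degOn n R b = 2 :=
  Set.ncard_eq_two.2 ⟨c, d, hcd, Set.ext h⟩

end Degrees

lemma IsAutOn.chase {n : ℕ} {R : ℕ → ℕ → Prop} {π : ℕ → ℕ} (h : IsAutOn n R π)
    {x y : ℕ → ℕ} {T : ℕ} (hx : ∀ t ≤ T, x t < n)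
    (hxR : ∀ t < T, R (x t) (x (t + 1))) (hxne : ∀ t, t + 2 ≤ T → x t ≠ x (t + 2))
    (hy : ∀ t, t + 2 ≤ T → ∀ z < n, R (y (t + 1)) z → z = y t ∨ z = y (t + 2))
    (h0 : π (x 0) = y 0) (h1 : π (x 1) = y 1) : ∀ t ≤ T, π (x t) = y t := by
  suffices key : ∀ t, t + 1 ≤ T → π (x t) = y t ∧ π (x (t + 1)) = y (t + 1) by
    rintro (_ | t) ht
    exacts [h0, (key t ht).2]
  intro t
  induction t with
  | zero => exact fun _ => ⟨h0, h1⟩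
  | succ t ih =>
    intro ht
    obtain ⟨e0, e1⟩ := ih (by omega)
    refine ⟨e1, ?_⟩
    have hR : R (y (t + 1)) (π (x (t + 2))) :=
      e1 ▸ h.rel (hx _ (by omega)) (hx _ (by omega)) (hxR (t + 1) (by omega))
    rcases hy t (by omega) _ (h.lt (hx _ (by omega))) hR with e | e
    · exact absurd ((h.eq_iff (hx _ (by omega)) (hx _ (by omega))).1 (e.trans e0.symm))
        (hxne t (by omega)).symm
    · exact e

def pathRel (lo hi i j : ℕ) : Prop := (lo ≤ i ∧ i + 1 = j ∧ j ≤ hi) ∨ (lo ≤ j ∧ j + 1 = i ∧ i ≤ hi)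

section Paths

variable {n lo hi : ℕ} {A : ℕ → ℕ → Prop} {π : ℕ → ℕ} {i j : ℕ}

lemma pathRel_comm : pathRel lo hi i j ↔ pathRel lo hi j i := by
  unfold pathRel; omega

lemma rel_of_pathRel (hsymm : ∀ i j, A i j → A j i) (hpath : ∀ i, i + 1 < n → A i (i + 1))
    (hhi : hi < n) (h : pathRel lo hi i j) : A i j := by
  rcases h with ⟨-, rfl, hj⟩ | ⟨-, rfl, hi⟩
  · exact hpath i (by omega)
  · exact hsymm _ _ (hpath j (by omega))

lemma IsAutOn.eqOn_or_eqOn_reflect_of_pathRel (h : IsAutOn n (pathRel lo hi) π)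
    (hlohi : lo < hi) (hhi : hi < n) :
    (∀ i, lo ≤ i → i ≤ hi → π i = i) ∨ (∀ i, lo ≤ i → i ≤ hi → π i = lo + hi - i) := by
  have hnbr : pathRel lo hi (π lo) (π (lo + 1)) :=
    h.rel (by omega) (by omega) (by unfold pathRel; omega)
  unfold pathRel at hnbr
  have hend : π lo = lo ∨ π lo = hi := by
    by_contra hmid
    have hdeg := h.degOn_eq (b := lo) (by omega)
    rw [degOn_eq_two (c := π lo - 1) (d := π lo + 1) (by omega) fun z => by unfold pathRel; omega,
      degOn_eq_one (c := lo + 1) fun z => by unfold pathRel; omega] at hdeg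
    omega
  have hx : ∀ t ≤ hi - lo, lo + t < n := fun t ht => by omega
  have hxR : ∀ t < hi - lo, pathRel lo hi (lo + t) (lo + (t + 1)) := fun t ht => by
    unfold pathRel; omega
  have hxne : ∀ t, t + 2 ≤ hi - lo → lo + t ≠ lo + (t + 2) := fun t _ => by omega
  rcases hend with he | he
  · have hfix := h.chase (y := fun t => lo + t) hx hxR hxne
      (fun t ht z hz hR => by unfold pathRel at hR; omega) (by simpa using he) (by omega)
    exact Or.inl fun i h1 h2 => by simpa [Nat.add_sub_cancel' h1] using hfix (i - lo) (by omega)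
  · have hrefl := h.chase (y := fun t => hi - t) hx hxR hxne
      (fun t ht z hz hR => by unfold pathRel at hR; omega) (by simpa using he) (by omega)
    exact Or.inr fun i h1 h2 => by
      have := hrefl (i - lo) (by omega)
      rwa [Nat.add_sub_cancel' h1, show hi - (i - lo) = lo + hi - i by omega] at this

end Paths

def negMod (n i : ℕ) : ℕ := if i = 0 then 0 else n - i

section PathColorings

variable {n : ℕ} {A : ℕ → ℕ → Prop}

lemma isDistinguishingOn_pathRel_of_not_rev (hn : 2 ≤ n) (hsymm : ∀ i j, A i j → A j i)
    (hpath : ∀ i, i + 1 < n → A i (i + 1))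
    (hrev : ¬ ∀ i < n, ∀ j < n, A (n - 1 - i) (n - 1 - j) ↔ A i j) :
    IsDistinguishingOn n A (pathRel 0 (n - 1)) where
  symm _ _ := pathRel_comm.1
  le _ _ _ _ := rel_of_pathRel hsymm hpath (by omega)
  eq_self π hA hR := by
    rcases hR.eqOn_or_eqOn_reflect_of_pathRel (by omega) (by omega) with hid | hrefl
    · exact fun i hi => hid i (by omega) (by omega)
    · refine absurd (fun i hi j hj => ?_) hrev
      rw [← hA.rel_iff i hi j hj, hrefl i (by omega) (by omega), hrefl j (by omega) (by omega),
        Nat.zero_add]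

lemma isDistinguishingOn_pathRel_one_of_not_negMod (hn : 3 ≤ n) (hsymm : ∀ i j, A i j → A j i)
    (hpath : ∀ i, i + 1 < n → A i (i + 1))
    (hneg : ¬ ∀ i < n, ∀ j < n, A (negMod n i) (negMod n j) ↔ A i j) :
    IsDistinguishingOn n A (pathRel 1 (n - 1)) where
  symm _ _ := pathRel_comm.1
  le _ _ _ _ := rel_of_pathRel hsymm hpath (by omega)
  eq_self π hA hR := by
    have h0 : π 0 = 0 := by
      have hdeg := hR.degOn_eq (b := 0) (by omega)
      rw [degOn_eq_zero (b := 0) fun z _ => by unfold pathRel; omega] at hdeg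
      have := hR.lt (i := 0) (by omega)
      by_contra hne
      rcases (by omega : π 0 + 1 < n ∨ π 0 = n - 1) with hlt | hlast
      · exact degOn_ne_zero (z := π 0 + 1) hlt (by unfold pathRel; omega) hdeg
      · exact degOn_ne_zero (z := π 0 - 1) (by omega) (by unfold pathRel; omega) hdeg
    rcases hR.eqOn_or_eqOn_reflect_of_pathRel (by omega) (by omega) with hid | hrefl
    · rintro (_ | i) hi
      exacts [h0, hid _ (by omega) (by omega)]
    · have hπ : ∀ i < n, π i = negMod n i := fun i hi => by
        unfold negMod
        split_ifs with hi0
        · exact hi0 ▸ h0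
        · rw [hrefl i (by omega) (by omega)]; omega
      refine absurd (fun i hi j hj => ?_) hneg
      rw [← hπ i hi, ← hπ j hj]
      exact hA.rel_iff i hi j hj

lemma isDistinguishingOn_of_adj_zero_two (hn : 6 ≤ n) (hsymm : ∀ i j, A i j → A j i)
    (hpath : ∀ i, i + 1 < n → A i (i + 1)) (h02 : A 0 2) (h13 : A 1 3) (h3 : ¬ A (n - 4) (n - 1)) :
    IsDistinguishingOn n A
      (fun i j => pathRel 0 (n - 1) (Equiv.swap 0 1 i) (Equiv.swap 0 1 j)) := by
  set s : ℕ → ℕ := ⇑(Equiv.swap 0 1)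
  have hs : ∀ i, 2 ≤ i → s i = i := fun i hi => Equiv.swap_apply_of_ne_of_ne (by omega) (by omega)
  have hs0 : s 0 = 1 := Equiv.swap_apply_left 0 1
  have hs1 : s 1 = 0 := Equiv.swap_apply_right 0 1
  have hslt : ∀ i < n, s i < n := fun i hi => by
    rcases (by omega : i = 0 ∨ i = 1 ∨ 2 ≤ i) with rfl | rfl | h
    exacts [hs0 ▸ by omega, hs1 ▸ by omega, (hs i h).symm ▸ hi]
  have hpath' : ∀ i, i + 1 < n → A (s i) (s (i + 1)) := fun i hi => by
    rcases (by omega : i = 0 ∨ i = 1 ∨ 2 ≤ i) with rfl | rfl | h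
    · rw [hs0, hs1]; exact hsymm _ _ (hpath 0 (by omega))
    · rw [hs1, hs (1 + 1) le_rfl]; exact h02
    · rw [hs i h, hs (i + 1) (by omega)]; exact hpath i hi
  have hrev : ¬ ∀ i < n, ∀ j < n, A (s (n - 1 - i)) (s (n - 1 - j)) ↔ A (s i) (s j) := by
    intro hrev
    have h03 := hrev 0 (by omega) 3 (by omega)
    rw [hs0, hs 3 (by omega), hs _ (by omega), hs _ (by omega), Nat.sub_zero,
      show n - 1 - 3 = n - 4 by omega] at h03
    exact h3 (hsymm _ _ (h03.2 h13))
  exact (isDistinguishingOn_pathRel_of_not_rev (by omega) (fun i j => hsymm _ _) hpath'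
    hrev).of_involution hslt fun i _ => Equiv.swap_apply_self 0 1 i

end PathColorings

/-- A spider with center `k` and legs of lengths `k`, `n - 2 - k` and `1`. -/
def spiderRel (n k i j : ℕ) : Prop :=
  pathRel 0 (n - 2) i j ∨ (i = k ∧ j = n - 1) ∨ (i = n - 1 ∧ j = k)

section Spider

variable {n k : ℕ} {π : ℕ → ℕ}

lemma spiderRel_comm {i j : ℕ} : spiderRel n k i j ↔ spiderRel n k j i := by
  unfold spiderRel pathRel; omega

lemma degOn_spiderRel_of_ne {t : ℕ} (ht : 0 < t) (htn : t < n - 2) (htk : t ≠ k) :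
    degOn n (spiderRel n k) t = 2 :=
  degOn_eq_two (c := t - 1) (d := t + 1) (by omega) fun z => by unfold spiderRel pathRel; omega

lemma IsAutOn.apply_center_of_spiderRel (h : IsAutOn n (spiderRel n k) π) (hk : 1 ≤ k)
    (hkn : k + 3 ≤ n) : π k = k := by
  have hnbr : ∀ j < n, spiderRel n k k j → spiderRel n k (π k) (π j) :=
    fun j hj => h.rel (by omega) hj
  have h1 := hnbr (k - 1) (by omega) (by unfold spiderRel pathRel; omega)
  have h2 := hnbr (k + 1) (by omega) (by unfold spiderRel pathRel; omega)
  have h3 := hnbr (n - 1) (by omega) (by unfold spiderRel pathRel; omega)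
  have := (h.eq_iff (i := k - 1) (j := k + 1) (by omega) (by omega)).not.2 (by omega)
  have := (h.eq_iff (i := k - 1) (j := n - 1) (by omega) (by omega)).not.2 (by omega)
  have := (h.eq_iff (i := k + 1) (j := n - 1) (by omega) (by omega)).not.2 (by omega)
  unfold spiderRel pathRel at h1 h2 h3
  omega

lemma IsAutOn.apply_pendant_of_spiderRel (h : IsAutOn n (spiderRel n k) π) (hk : 2 ≤ k)
    (hkn : k + 4 ≤ n) : π (n - 1) = n - 1 := by
  have hnk := h.rel (i := k) (j := n - 1) (by omega) (by omega)
    (by unfold spiderRel pathRel; omega)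
  rw [h.apply_center_of_spiderRel (by omega) (by omega)] at hnk
  unfold spiderRel pathRel at hnk
  have hdeg := h.degOn_eq (b := n - 1) (by omega)
  rw [degOn_eq_one (b := n - 1) (c := k) fun z => by unfold spiderRel pathRel; omega] at hdeg
  by_contra hne
  rw [degOn_spiderRel_of_ne (t := π (n - 1)) (by omega) (by omega) (by omega)] at hdeg
  omega

lemma IsAutOn.apply_succ_center_of_spiderRel (h : IsAutOn n (spiderRel n k) π) (hk : 2 ≤ k)
    (hkn : k + 4 ≤ n) (hlegs : 2 * k ≠ n - 2) : π (k + 1) = k + 1 := by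
  have hcenter := h.apply_center_of_spiderRel (by omega) (by omega)
  have hk1 := h.rel (i := k) (j := k + 1) (by omega) (by omega)
    (by unfold spiderRel pathRel; omega)
  have hne := (h.eq_iff (i := k + 1) (j := n - 1) (by omega) (by omega)).not.2 (by omega)
  rw [hcenter] at hk1
  rw [h.apply_pendant_of_spiderRel hk hkn] at hne
  unfold spiderRel pathRel at hk1
  by_contra hne'
  -- otherwise `π` folds the two long legs onto each other until the shorter one ends in a leaf
  obtain ⟨T, hTk, hTn, hTeq⟩ : ∃ T, T ≤ k ∧ T ≤ n - 2 - k ∧ (T = k ∨ T = n - 2 - k) :=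
    ⟨min k (n - 2 - k), min_le_left _ _, min_le_right _ _, by omega⟩
  have hfold := h.chase (x := fun t => k + t) (y := fun t => k - t) (T := T) (fun t _ => by omega)
    (fun t _ => by unfold spiderRel pathRel; omega) (fun t _ => by omega)
    (fun t _ z _ hz => by unfold spiderRel pathRel at hz; omega) (by simpa using hcenter)
    (by omega)
  have hdeg := h.degOn_eq (b := k + T) (by omega)
  rw [hfold T le_rfl] at hdeg
  rcases hTeq with rfl | rfl
  · rw [Nat.sub_self, degOn_spiderRel_of_ne (t := T + T) (by omega) (by omega) (by omega),
      degOn_eq_one (c := 1) fun z => by unfold spiderRel pathRel; omega] at hdeg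
    omega
  · rw [show k + (n - 2 - k) = n - 2 by omega,
      degOn_spiderRel_of_ne (t := k - (n - 2 - k)) (by omega) (by omega) (by omega),
      degOn_eq_one (c := n - 3) fun z => by unfold spiderRel pathRel; omega] at hdeg
    omega

lemma IsAutOn.eq_self_of_spiderRel (h : IsAutOn n (spiderRel n k) π) (hk : 2 ≤ k)
    (hkn : k + 4 ≤ n) (hlegs : 2 * k ≠ n - 2) : ∀ i < n, π i = i := by
  have hcenter := h.apply_center_of_spiderRel (by omega) (by omega)
  have hsucc := h.apply_succ_center_of_spiderRel hk hkn hlegs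
  have hpred : π (k - 1) = k - 1 := by
    have hk1 := h.rel (i := k) (j := k - 1) (by omega) (by omega)
      (by unfold spiderRel pathRel; omega)
    have hne1 := (h.eq_iff (i := k - 1) (j := k + 1) (by omega) (by omega)).not.2 (by omega)
    have hne2 := (h.eq_iff (i := k - 1) (j := n - 1) (by omega) (by omega)).not.2 (by omega)
    rw [hcenter] at hk1
    rw [hsucc] at hne1
    rw [h.apply_pendant_of_spiderRel hk hkn] at hne2
    unfold spiderRel pathRel at hk1
    omega
  have hup := h.chase (x := fun t => k + t) (y := fun t => k + t) (T := n - 2 - k)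
    (fun t _ => by omega) (fun t _ => by unfold spiderRel pathRel; omega) (fun t _ => by omega)
    (fun t _ z _ hz => by unfold spiderRel pathRel at hz; omega) (by simpa using hcenter) hsucc
  have hdown := h.chase (x := fun t => k - t) (y := fun t => k - t) (T := k)
    (fun t _ => by omega) (fun t _ => by unfold spiderRel pathRel; omega) (fun t _ => by omega)
    (fun t _ z _ hz => by unfold spiderRel pathRel at hz; omega) (by simpa using hcenter) hpred
  intro i hi
  rcases (by omega : i < k ∨ (k ≤ i ∧ i ≤ n - 2) ∨ i = n - 1) with hlt | hmid | rfl
  · simpa [show k - (k - i) = i by omega] using hdown (k - i) (by omega)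
  · simpa [show k + (i - k) = i by omega] using hup (i - k) (by omega)
  · exact h.apply_pendant_of_spiderRel hk hkn

lemma isDistinguishingOn_spiderRel {A : ℕ → ℕ → Prop} (hk : 2 ≤ k) (hkn : k + 4 ≤ n)
    (hlegs : 2 * k ≠ n - 2) (hsymm : ∀ i j, A i j → A j i) (hpath : ∀ i, i + 1 < n → A i (i + 1))
    (hchord : A k (n - 1)) : IsDistinguishingOn n A (spiderRel n k) where
  symm _ _ := spiderRel_comm.1
  le _ _ _ _ := by
    rintro (h | ⟨rfl, rfl⟩ | ⟨rfl, rfl⟩)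
    exacts [rel_of_pathRel hsymm hpath (by omega) h, hchord, hsymm _ _ hchord]
  eq_self _ _ hR := hR.eq_self_of_spiderRel hk hkn hlegs

end Spider

def splitPathRel (n i j : ℕ) : Prop := pathRel 0 1 i j ∨ pathRel 2 (n - 2) i j

section SplitPath

variable {n : ℕ} {A : ℕ → ℕ → Prop} {π : ℕ → ℕ}

lemma IsAutOn.apply_last_of_splitPathRel (h : IsAutOn n (splitPathRel n) π) (hn : 5 ≤ n) :
    π (n - 1) = n - 1 := by
  have hdeg := h.degOn_eq (b := n - 1) (by omega)
  rw [degOn_eq_zero (b := n - 1) fun z _ => by unfold splitPathRel pathRel; omega] at hdeg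
  have := h.lt (i := n - 1) (by omega)
  by_contra hne
  rcases (by omega : π (n - 1) ≤ 1 ∨ 2 ≤ π (n - 1) ∧ π (n - 1) < n - 2 ∨ π (n - 1) = n - 2)
    with h | h | h
  · exact degOn_ne_zero (z := 1 - π (n - 1)) (by omega)
      (by unfold splitPathRel pathRel; omega) hdeg
  · exact degOn_ne_zero (z := π (n - 1) + 1) (by omega)
      (by unfold splitPathRel pathRel; omega) hdeg
  · exact degOn_ne_zero (z := π (n - 1) - 1) (by omega)
      (by unfold splitPathRel pathRel; omega) hdeg

lemma eq_of_degOn_splitPathRel_eq_one {t : ℕ} (ht : t < n - 1)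
    (hdeg : degOn n (splitPathRel n) t = 1) : t = 0 ∨ t = 1 ∨ t = 2 ∨ t = n - 2 := by
  by_contra hmid
  rw [degOn_eq_two (c := t - 1) (d := t + 1) (by omega) fun z => by
    unfold splitPathRel pathRel; omega] at hdeg
  omega

lemma IsAutOn.apply_leaf_of_splitPathRel (hA : IsAutOn n A π) (hR : IsAutOn n (splitPathRel n) π)
    (hn : 5 ≤ n) (h1 : ¬ A (n - 1) 1) (h2 : ¬ A (n - 1) 2) {i : ℕ} (hi : i < n - 1)
    (hdeg : degOn n (splitPathRel n) i = 1) (hAi : A (n - 1) i) : π i = 0 ∨ π i = n - 2 := by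
  have hlast := hR.apply_last_of_splitPathRel hn
  have hAπ : A (n - 1) (π i) := hlast ▸ hA.rel (by omega) (by omega) hAi
  have hne : π i ≠ n - 1 := by rw [← hlast, Ne, hR.eq_iff (by omega) (by omega)]; omega
  have := hR.lt (i := i) (by omega)
  rcases eq_of_degOn_splitPathRel_eq_one (t := π i) (by omega)
    ((hR.degOn_eq (by omega)).trans hdeg) with h | h | h | h
  exacts [Or.inl h, absurd (h ▸ hAπ) h1, absurd (h ▸ hAπ) h2, Or.inr h]

lemma isDistinguishingOn_splitPathRel (hn : 6 ≤ n) (hsymm : ∀ i j, A i j → A j i)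
    (hpath : ∀ i, i + 1 < n → A i (i + 1)) (h0 : A (n - 1) 0) (h1 : ¬ A (n - 1) 1)
    (h2 : ¬ A (n - 1) 2) : IsDistinguishingOn n A (splitPathRel n) where
  symm _ _ := by unfold splitPathRel pathRel; omega
  le _ _ _ _ := by
    rintro (h | h)
    exacts [rel_of_pathRel hsymm hpath (by omega) h, rel_of_pathRel hsymm hpath (by omega) h]
  eq_self π hA hR := by
    have hleaf := fun i => hA.apply_leaf_of_splitPathRel hR (by omega) h1 h2 (i := i)
    have h01 := hR.rel (i := 0) (j := 1) (by omega) (by omega)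
      (by unfold splitPathRel pathRel; omega)
    have hπ0 : π 0 = 0 := by
      refine (hleaf 0 (by omega) (degOn_eq_one (c := 1) fun z => by
        unfold splitPathRel pathRel; omega) h0).resolve_right fun hπ0 => ?_
      rw [hπ0] at h01
      unfold splitPathRel pathRel at h01
      have hdeg := hR.degOn_eq (b := 1) (by omega)
      rw [show π 1 = n - 3 by omega,
        degOn_eq_two (c := n - 4) (d := n - 2) (by omega) fun z => by
          unfold splitPathRel pathRel; omega,
        degOn_eq_one (b := 1) (c := 0) fun z => by unfold splitPathRel pathRel; omega] at hdeg
      omega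
    have hπn2 : π (n - 2) = n - 2 := by
      have hA' : A (n - 2) (n - 1) := by
        simpa [show n - 2 + 1 = n - 1 by omega] using hpath (n - 2) (by omega)
      refine (hleaf (n - 2) (by omega) (degOn_eq_one (c := n - 3) fun z => by
        unfold splitPathRel pathRel; omega) (hsymm _ _ hA')).resolve_left fun e => ?_
      rw [← hπ0, hR.eq_iff (by omega) (by omega)] at e
      omega
    have h23 := hR.rel (i := n - 2) (j := n - 3) (by omega) (by omega)
      (by unfold splitPathRel pathRel; omega)
    rw [hπ0] at h01
    rw [hπn2] at h23
    unfold splitPathRel pathRel at h01 h23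
    have hfix := hR.chase (x := fun t => n - 2 - t) (y := fun t => n - 2 - t) (T := n - 4)
      (fun t _ => by omega) (fun t _ => by unfold splitPathRel pathRel; omega)
      (fun t _ => by omega) (fun t _ z _ hz => by unfold splitPathRel pathRel at hz; omega)
      (by simpa using hπn2) (by rw [show n - 2 - 1 = n - 3 by omega]; omega)
    intro i hi
    rcases (by omega : i = 0 ∨ i = 1 ∨ (2 ≤ i ∧ i ≤ n - 2) ∨ i = n - 1) with rfl | rfl | hmid | rfl
    · exact hπ0
    · omega
    · simpa [show n - 2 - (n - 2 - i) = i by omega] using hfix (n - 2 - i) (by omega)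
    · exact hR.apply_last_of_splitPathRel (by omega)

end SplitPath

section Circulant

variable {n : ℕ} {A : ℕ → ℕ → Prop}

/-- The rotation `i ↦ i + 1` is the product of the reflections `i ↦ n - 1 - i` and `i ↦ -i`. -/
lemma shift_iff_of_rev_of_negMod (hrev : ∀ i < n, ∀ j < n, A (n - 1 - i) (n - 1 - j) ↔ A i j)
    (hneg : ∀ i < n, ∀ j < n, A (negMod n i) (negMod n j) ↔ A i j) :
    ∀ i d, i + d < n → (A i (i + d) ↔ A 0 d) := by
  intro i d
  induction i with
  | zero => simp
  | succ i ih =>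
    intro h
    rw [← ih (by omega), ← hneg _ (by omega) _ (by omega), ← hrev i (by omega) (i + d) (by omega),
      negMod, negMod, if_neg (by omega), if_neg (by omega), show n - (i + 1) = n - 1 - i by omega,
      show n - (i + 1 + d) = n - 1 - (i + d) by omega]

lemma exists_isDistinguishingOn_of_shift_iff (hn : 7 ≤ n) (hsymm : ∀ i j, A i j → A j i)
    (hpath : ∀ i, i + 1 < n → A i (i + 1)) (hshift : ∀ i d, i + d < n → (A i (i + d) ↔ A 0 d))
    (hneg : ∀ d, 0 < d → d < n → (A 0 (n - d) ↔ A 0 d)) :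
    ∃ R, IsDistinguishingOn n A R := by
  have hlast : ∀ d, d < n → (A (n - 1 - d) (n - 1) ↔ A 0 d) := fun d hd => by
    simpa [show n - 1 - d + d = n - 1 by omega] using hshift (n - 1 - d) d (by omega)
  have hlast' : ∀ d, d + 1 < n → (A (n - 1) d ↔ A 0 (d + 1)) := fun d hd => by
    rw [← hneg (d + 1) (by omega) hd, show n - (d + 1) = n - 1 - d by omega,
      ← hlast (n - 1 - d) (by omega), show n - 1 - (n - 1 - d) = d by omega]
    exact ⟨hsymm _ _, hsymm _ _⟩
  by_cases h3 : A 0 3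
  · exact ⟨_, isDistinguishingOn_spiderRel (k := n - 4) (by omega) (by omega) (by omega) hsymm
      hpath ((hlast 3 (by omega)).2 h3)⟩
  by_cases h2 : A 0 2
  · exact ⟨_, isDistinguishingOn_of_adj_zero_two (by omega) hsymm hpath h2 ((hshift 1 2 (by omega)).2 h2)
      (by simpa [show n - 1 - 3 = n - 4 by omega] using (hlast 3 (by omega)).not.2 h3)⟩
  · exact ⟨_, isDistinguishingOn_splitPathRel (by omega) hsymm hpath
      ((hlast' 0 (by omega)).2 (hpath 0 (by omega))) ((hlast' 1 (by omega)).not.2 h2)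
      ((hlast' 2 (by omega)).not.2 h3)⟩

end Circulant

theorem exists_isDistinguishingOn {n : ℕ} {A : ℕ → ℕ → Prop} (hn : 7 ≤ n)
    (hsymm : ∀ i j, A i j → A j i) (hpath : ∀ i, i + 1 < n → A i (i + 1)) :
    ∃ R, IsDistinguishingOn n A R := by
  by_cases hrev : ∀ i < n, ∀ j < n, A (n - 1 - i) (n - 1 - j) ↔ A i j
  · by_cases hneg : ∀ i < n, ∀ j < n, A (negMod n i) (negMod n j) ↔ A i j
    · refine exists_isDistinguishingOn_of_shift_iff hn hsymm hpath
        (shift_iff_of_rev_of_negMod hrev hneg) fun d hd hdn => ?_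
      have := hneg 0 (by omega) d hdn
      rwa [negMod, negMod, if_pos rfl, if_neg (by omega)] at this
    · exact ⟨_, isDistinguishingOn_pathRel_one_of_not_negMod (by omega) hsymm hpath hneg⟩
  · exact ⟨_, isDistinguishingOn_pathRel_of_not_rev (by omega) hsymm hpath hrev⟩

theorem distinguishingIndex_le_two_of_hamiltonianPath {V : Type*} [Fintype V] [DecidableEq V]
    (G : SimpleGraph V) (h7 : 7 ≤ Fintype.card V) (hp : HasHamiltonianPath G) :
    distinguishingIndex G ≤ 2 := by
  obtain ⟨u, v, p, hp⟩ := hp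
  have hlen := hp.length_eq
  obtain ⟨R, hR⟩ := exists_isDistinguishingOn (A := fun i j => G.Adj (p.getVert i) (p.getVert j))
    h7 (fun i j h => h.symm) (fun i hi => p.adj_getVert_succ (by omega))
  exact distinguishingIndex_le_two_of_isDistinguishingOn hp.bijOn_getVert hR
end

section
/- For n ≥ 2, the distinguishing index of the friendship graph Fₙ equals ⌈(1/3)·aₙ^{1/3} + 1/(3·aₙ^{1/3}) + 1/3⌉, where aₙ = 1 + 27n + 3√(81n² + 6n). -/
/-!
For `n ≥ 2` the centre of `Fₙ` is its only dominating vertex, so every automorphism fixes it,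
permutes the `n` triangles and possibly swaps the two outer vertices of each; conversely every
such map is an automorphism. Hence an edge colouring is distinguishing iff the triangles receive
pairwise different types, a type being an unordered pair of *distinct* spoke colours together
with a rim colour. With `d` colours there are `d.choose 2 * d` types, so `D'(Fₙ)` is the least `d`
with `2 n ≤ d² (d - 1)`. Cardano's formula gives the real root `x > 1` of `x² (x - 1) = 2 n`, and
since `t ↦ t² (t - 1)` is increasing on `[1, ∞)`, that least `d` is `⌈x⌉`.
-/

open SimpleGraph

open SimpleGraph Function Sum

def IsDistinguishingEdgeColoring {V α : Type*} (G : SimpleGraph V) (c : Sym2 V → α) : Prop :=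
  ∀ f : G ≃g G, (∀ e ∈ G.edgeSet, c (Sym2.map f e) = c e) → ∀ v, f v = v

lemma distinguishingIndex_eq_sInf {V : Type*} (G : SimpleGraph V) :
    distinguishingIndex G = sInf {d | ∃ c : Sym2 V → Fin d, IsDistinguishingEdgeColoring G c} :=
  rfl

lemma Equiv.Perm.fin_two_cases (π : Equiv.Perm (Fin 2)) : π = 1 ∨ π = Equiv.swap 0 1 := by
  revert π; decide

lemma Equiv.Perm.fin_two_apply_apply (π : Equiv.Perm (Fin 2)) (k : Fin 2) : π (π k) = k := by
  revert π k; decide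

lemma Sym2.mk_comp_perm_fin_two {β : Type*} (g : Fin 2 → β) (π : Equiv.Perm (Fin 2)) :
    s(g (π 0), g (π 1)) = s(g 0, g 1) := by
  rcases π.fin_two_cases with rfl | rfl
  · rfl
  · exact Sym2.eq_swap

def joinGraph.isoRight {V W W' : Type*} (G : SimpleGraph V) {H : SimpleGraph W}
    {H' : SimpleGraph W'} (e : H ≃g H') : joinGraph G H ≃g joinGraph G H' where
  toEquiv := Equiv.sumCongr (Equiv.refl V) e.toEquiv
  map_rel_iff' := by
    rintro (a | a) (b | b)
    · exact Iff.rfl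
    · exact Iff.rfl
    · exact Iff.rfl
    · exact e.map_adj_iff

def nK2.shearIso {n : ℕ} (σ : Equiv.Perm (Fin n)) (τ : Fin n → Equiv.Perm (Fin 2)) :
    nK2 n ≃g nK2 n where
  toEquiv := σ.prodShear τ
  map_rel_iff' := by
    rintro ⟨i, k⟩ ⟨i', k'⟩
    change σ i = σ i' ∧ τ i k ≠ τ i' k' ↔ i = i' ∧ k ≠ k'
    rw [σ.injective.eq_iff]
    constructor <;> rintro ⟨rfl, h⟩ <;> exact ⟨rfl, by simpa using h⟩

namespace friendshipGraph

variable {n : ℕ} {α : Type*}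

local notation "V" n => Fin 1 ⊕ (Fin n × Fin 2)

def spoke (v : Fin n × Fin 2) : Sym2 (V n) := s(inl 0, inr v)

def rim (i : Fin n) : Sym2 (V n) := s(inr (i, 0), inr (i, 1))

lemma adj_inl_inr (a : Fin 1) (v : Fin n × Fin 2) : (friendshipGraph n).Adj (inl a) (inr v) :=
  trivial

lemma adj_inr_inr {v w : Fin n × Fin 2} :
    (friendshipGraph n).Adj (inr v) (inr w) ↔ v.1 = w.1 ∧ v.2 ≠ w.2 :=
  Iff.rfl

lemma not_adj_inl_inl (a b : Fin 1) : ¬ (friendshipGraph n).Adj (inl a) (inl b) :=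
  fun h => (h : a ≠ b) (Subsingleton.elim a b)

lemma mem_edgeSet_cases {e : Sym2 (V n)} (he : e ∈ (friendshipGraph n).edgeSet) :
    (∃ v, e = spoke v) ∨ ∃ i, e = rim i := by
  induction e using Sym2.ind with
  | _ x y =>
    rcases x with a | ⟨i, k⟩ <;> rcases y with b | ⟨i', k'⟩
    · exact absurd he (not_adj_inl_inl (n := n) a b)
    · exact .inl ⟨(i', k'), by rw [Subsingleton.elim a 0, spoke]⟩
    · exact .inl ⟨(i, k), by rw [Subsingleton.elim b 0, spoke, Sym2.eq_swap]⟩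
    · obtain ⟨rfl, hk⟩ := adj_inr_inr.mp he
      refine .inr ⟨i, ?_⟩
      fin_cases k <;> fin_cases k' <;> first | exact absurd rfl hk | rfl | exact Sym2.eq_swap

/-- The centre is the only vertex adjacent to all others once there are two triangles. -/
lemma iso_apply_inl (hn : 2 ≤ n) (f : friendshipGraph n ≃g friendshipGraph n) (a : Fin 1) :
    f (inl a) = inl a := by
  have : Nontrivial (Fin n) := Fin.nontrivial_iff_two_le.mpr hn
  rcases h : f (inl a) with b | ⟨i, k⟩
  · rw [Subsingleton.elim b a]
  obtain ⟨j, hji⟩ := exists_ne i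
  have hw : f.symm (inr (j, 0)) ≠ inl a := by
    intro hw
    have := congrArg f hw
    rw [f.apply_symm_apply, h, inr.injEq, Prod.mk.injEq] at this
    exact hji this.1
  have hadj : (friendshipGraph n).Adj (inl a) (f.symm (inr (j, 0))) := by
    rcases hx : f.symm (inr (j, 0)) with b | v
    · exact (hw (hx.trans (congrArg inl (Subsingleton.elim b a)))).elim
    · exact adj_inl_inr a v
  have := f.map_adj_iff.mpr hadj
  rw [h, f.apply_symm_apply] at this
  exact (hji (adj_inr_inr.mp this).1.symm).elim

lemma exists_iso_apply_inr (hn : 2 ≤ n) (f : friendshipGraph n ≃g friendshipGraph n)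
    (i : Fin n) : ∃ (j : Fin n) (π : Equiv.Perm (Fin 2)), ∀ k, f (inr (i, k)) = inr (j, π k) := by
  have hinr : ∀ v, ∃ w, f (inr v) = inr w := fun v => by
    rcases h : f (inr v) with a | w
    · rw [← iso_apply_inl hn f a] at h
      exact absurd (f.injective h) inr_ne_inl
    · exact ⟨w, rfl⟩
  choose p hp using hinr
  have hsame : ∀ k k', k ≠ k' → (p (i, k)).1 = (p (i, k')).1 ∧ (p (i, k)).2 ≠ (p (i, k')).2 := by
    intro k k' hk
    have := f.map_adj_iff.mpr
      (adj_inr_inr.mpr ⟨rfl, hk⟩ : (friendshipGraph n).Adj (inr (i, k)) (inr (i, k')))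
    rwa [hp, hp] at this
  have hinj : Injective fun k => (p (i, k)).2 := fun k k' h =>
    by_contra fun hk => (hsame k k' hk).2 h
  refine ⟨(p (i, 0)).1, Equiv.ofBijective _ hinj.bijective_of_finite, fun k => ?_⟩
  rw [hp, inr.injEq]
  refine Prod.ext ?_ rfl
  by_cases hk : k = 0
  · rw [hk]
  · exact (hsame k 0 hk).1

def shearIso (σ : Equiv.Perm (Fin n)) (τ : Fin n → Equiv.Perm (Fin 2)) :
    friendshipGraph n ≃g friendshipGraph n :=
  joinGraph.isoRight ⊤ (nK2.shearIso σ τ)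

lemma shearIso_apply_inr (σ : Equiv.Perm (Fin n)) (τ : Fin n → Equiv.Perm (Fin 2))
    (v : Fin n × Fin 2) : shearIso σ τ (inr v) = inr (σ v.1, τ v.1 v.2) :=
  rfl

lemma shearIso_preserves {c : Sym2 (V n) → α} {σ : Equiv.Perm (Fin n)}
    {τ : Fin n → Equiv.Perm (Fin 2)} (hspoke : ∀ l k, c (spoke (σ l, τ l k)) = c (spoke (l, k)))
    (hrim : ∀ l, c (rim (σ l)) = c (rim l)) :
    ∀ e ∈ (friendshipGraph n).edgeSet, c (Sym2.map (shearIso σ τ) e) = c e := by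
  intro e he
  rcases mem_edgeSet_cases he with ⟨⟨l, k⟩, rfl⟩ | ⟨l, rfl⟩
  · exact hspoke l k
  · change c s(inr (σ l, τ l 0), inr (σ l, τ l 1)) = _
    rw [Sym2.mk_comp_perm_fin_two (fun k => (inr (σ l, k) : V n)) (τ l)]
    exact hrim l

def TrianglesMatch (c : Sym2 (V n) → α) (i j : Fin n) (π : Equiv.Perm (Fin 2)) : Prop :=
  (∀ k, c (spoke (j, π k)) = c (spoke (i, k))) ∧ c (rim j) = c (rim i)

lemma exists_iso_of_trianglesMatch {c : Sym2 (V n) → α} {i j : Fin n} {π : Equiv.Perm (Fin 2)}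
    (h : TrianglesMatch c i j π) :
    ∃ f : friendshipGraph n ≃g friendshipGraph n,
      (∀ e ∈ (friendshipGraph n).edgeSet, c (Sym2.map f e) = c e) ∧
        f (inr (i, 0)) = inr (j, π 0) := by
  obtain ⟨hspoke, hrim⟩ := h
  let τ : Fin n → Equiv.Perm (Fin 2) := fun l => if l = i ∨ l = j then π else 1
  refine ⟨shearIso (Equiv.swap i j) τ, shearIso_preserves (fun l k => ?_) (fun l => ?_), ?_⟩
  · by_cases hli : l = i
    · subst hli
      simp [τ, hspoke]
    by_cases hlj : l = j
    · subst hlj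
      simpa [τ, Equiv.Perm.fin_two_apply_apply] using (hspoke (π k)).symm
    · simp [τ, hli, hlj, Equiv.swap_apply_of_ne_of_ne]
  · by_cases hli : l = i
    · subst hli
      simp [hrim]
    by_cases hlj : l = j
    · subst hlj
      simp [hrim]
    · simp [Equiv.swap_apply_of_ne_of_ne hli hlj]
  · simp [shearIso_apply_inr, τ]

lemma trianglesMatch_of_iso (hn : 2 ≤ n) {c : Sym2 (V n) → α}
    {f : friendshipGraph n ≃g friendshipGraph n}
    (hf : ∀ e ∈ (friendshipGraph n).edgeSet, c (Sym2.map f e) = c e) {i j : Fin n}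
    {π : Equiv.Perm (Fin 2)} (hfi : ∀ k, f (inr (i, k)) = inr (j, π k)) :
    TrianglesMatch c i j π := by
  refine ⟨fun k => ?_, ?_⟩
  · have := hf (spoke (i, k)) (adj_inl_inr 0 (i, k))
    rwa [spoke, Sym2.map_mk, iso_apply_inl hn, hfi] at this
  · have := hf (rim i) (adj_inr_inr.mpr ⟨rfl, zero_ne_one⟩)
    rwa [rim, Sym2.map_mk, hfi, hfi,
      Sym2.mk_comp_perm_fin_two (fun k => (inr (j, k) : V n))] at this

def triangleType (c : Sym2 (V n) → α) (i : Fin n) : Sym2 α × α :=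
  (s(c (spoke (i, 0)), c (spoke (i, 1))), c (rim i))

lemma exists_trianglesMatch_iff {c : Sym2 (V n) → α} {i j : Fin n} :
    (∃ π, TrianglesMatch c i j π) ↔ triangleType c j = triangleType c i := by
  constructor
  · rintro ⟨π, hspoke, hrim⟩
    refine Prod.ext ?_ hrim
    change s(c (spoke (j, 0)), c (spoke (j, 1))) = s(c (spoke (i, 0)), c (spoke (i, 1)))
    rw [← hspoke 0, ← hspoke 1, Sym2.mk_comp_perm_fin_two (fun k => c (spoke (j, k)))]
  · intro h
    obtain ⟨hs, hrim⟩ := Prod.ext_iff.mp h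
    rcases Sym2.eq_iff.mp hs with ⟨h0, h1⟩ | ⟨h0, h1⟩
    · exact ⟨1, fun k => by fin_cases k <;> simp [h0, h1], hrim⟩
    · exact ⟨Equiv.swap 0 1, fun k => by fin_cases k <;> simp [h0, h1], hrim⟩

theorem isDistinguishingEdgeColoring_iff (hn : 2 ≤ n) (c : Sym2 (V n) → α) :
    IsDistinguishingEdgeColoring (friendshipGraph n) c ↔
      Injective (triangleType c) ∧ ∀ i, ¬ (triangleType c i).1.IsDiag := by
  constructor
  · intro hc
    have hfix : ∀ {i j π}, TrianglesMatch c i j π → (inr (j, π 0) : V n) = inr (i, 0) := by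
      intro i j π h
      obtain ⟨f, hf, hfi⟩ := exists_iso_of_trianglesMatch h
      rw [← hfi]
      exact hc f hf _
    refine ⟨fun i j h => ?_, fun i hdiag => ?_⟩
    · obtain ⟨π, hπ⟩ := exists_trianglesMatch_iff.mpr h
      exact (Prod.mk.inj (inr.inj (hfix hπ))).1
    · have hπ : TrianglesMatch c i i (Equiv.swap 0 1) := by
        refine ⟨fun k => ?_, rfl⟩
        have := Sym2.mk_isDiag_iff.mp hdiag
        fin_cases k <;> simp [this]
      simpa using hfix hπ
  · rintro ⟨hinj, hdiag⟩ f hf (a | ⟨i, k⟩)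
    · exact iso_apply_inl hn f a
    obtain ⟨j, π, hfi⟩ := exists_iso_apply_inr hn f i
    have hm := trianglesMatch_of_iso hn hf hfi
    obtain rfl : i = j := hinj (exists_trianglesMatch_iff.mp ⟨π, hm⟩).symm
    rcases π.fin_two_cases with rfl | rfl
    · exact hfi k
    · refine (hdiag i (Sym2.mk_isDiag_iff.mpr ?_)).elim
      simpa using (hm.1 0).symm

/-- `z` is a filler value on non-edges. -/
def triangleColoring (z : α) (sp : Fin n × Fin 2 → α) (r : Fin n → α) : Sym2 (V n) → α :=
  Sym2.lift ⟨fun x y => match x, y with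
    | inl _, inl _ => z
    | inl _, inr v => sp v
    | inr v, inl _ => sp v
    | inr v, inr w => if v.1 = w.1 then r v.1 else z,
    by
      rintro (a | v) (b | w)
      · rfl
      · rfl
      · rfl
      · by_cases h : v.1 = w.1
        · simp [h]
        · simp [h, Ne.symm h]⟩

lemma triangleType_triangleColoring (z : α) (sp : Fin n × Fin 2 → α) (r : Fin n → α)
    (i : Fin n) : triangleType (triangleColoring z sp r) i = (s(sp (i, 0), sp (i, 1)), r i) := by
  simp [triangleType, triangleColoring, spoke, rim]

theorem exists_isDistinguishingEdgeColoring_iff (hn : 2 ≤ n) (m : ℕ) :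
    (∃ c : Sym2 (V n) → Fin m, IsDistinguishingEdgeColoring (friendshipGraph n) c) ↔
      n ≤ m.choose 2 * m := by
  simp_rw [isDistinguishingEdgeColoring_iff hn]
  constructor
  · rintro ⟨c, hinj, hdiag⟩
    have := Fintype.card_le_of_injective
      (fun i => ((⟨(triangleType c i).1, hdiag i⟩ : {z : Sym2 (Fin m) // ¬ z.IsDiag}),
        (triangleType c i).2))
      fun i j h => hinj (Prod.ext (congrArg (·.1.1) h) (congrArg (·.2) h))
    rwa [Fintype.card_fin, Fintype.card_prod, Sym2.card_subtype_not_diag, Fintype.card_fin] at this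
  · intro h
    obtain ⟨ι⟩ : Nonempty (Fin n ↪ {z : Sym2 (Fin m) // ¬ z.IsDiag} × Fin m) :=
      Function.Embedding.nonempty_of_card_le (by
        rwa [Fintype.card_fin, Fintype.card_prod, Sym2.card_subtype_not_diag, Fintype.card_fin])
    let sp : Fin n × Fin 2 → Fin m := fun v => ![(ι v.1).1.1.out.1, (ι v.1).1.1.out.2] v.2
    let c := triangleColoring (ι ⟨0, by omega⟩).2 sp fun i => (ι i).2
    have htype : ∀ i, triangleType c i = ((ι i).1.1, (ι i).2) := fun i => by
      rw [triangleType_triangleColoring]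
      exact Prod.ext (Quot.out_eq _) rfl
    refine ⟨c, fun i j hij => ι.injective ?_, fun i => ?_⟩
    · rw [htype, htype] at hij
      exact Prod.ext (Subtype.ext (congrArg Prod.fst hij)) (congrArg Prod.snd hij :)
    · rw [htype]
      exact (ι i).1.2

end friendshipGraph

/-- Cardano's formula for the real root of `x ^ 2 * (x - 1) = 2 * N`. -/
noncomputable def friendshipRoot (N : ℝ) : ℝ :=
  (1 / 3 : ℝ) * (1 + 27 * N + 3 * Real.sqrt (81 * N ^ 2 + 6 * N)) ^ ((1 : ℝ) / 3)
    + 1 / (3 * (1 + 27 * N + 3 * Real.sqrt (81 * N ^ 2 + 6 * N)) ^ ((1 : ℝ) / 3)) + 1 / 3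

lemma friendshipRoot_spec {N : ℝ} (hN : 0 ≤ N) :
    1 ≤ friendshipRoot N ∧ friendshipRoot N ^ 2 * (friendshipRoot N - 1) = 2 * N := by
  set s := Real.sqrt (81 * N ^ 2 + 6 * N)
  have hs : s ^ 2 = 81 * N ^ 2 + 6 * N := Real.sq_sqrt (by positivity)
  have ha : 0 < 1 + 27 * N + 3 * s := by positivity
  set u := (1 + 27 * N + 3 * s) ^ ((1 : ℝ) / 3)
  have hu : 0 < u := Real.rpow_pos_of_pos ha _
  have hu3 : u ^ 3 = 1 + 27 * N + 3 * s := by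
    rw [← Real.rpow_natCast, ← Real.rpow_mul ha.le]
    norm_num
  set v := u⁻¹
  have huv : u * v = 1 := mul_inv_cancel₀ hu.ne'
  -- `u⁻¹` is the other cube root of Cardano's formula: `1 + 27 N ± 3 s` are reciprocal
  have hv3 : v ^ 3 = 1 + 27 * N - 3 * s := by
    rw [inv_pow, hu3]
    exact inv_eq_of_mul_eq_one_right (by linear_combination (-9 : ℝ) * hs)
  have hx : friendshipRoot N = (u + v + 1) / 3 := by
    change 1 / 3 * u + 1 / (3 * u) + 1 / 3 = (u + u⁻¹ + 1) / 3
    ring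
  have hAM : 2 ≤ u + v := by nlinarith [sq_nonneg (u - 1), inv_pos.mpr hu]
  refine ⟨by rw [hx]; linarith, ?_⟩
  rw [hx]
  linear_combination (1 / 27 : ℝ) * (hu3 + hv3) + (u + v) / 9 * huv

lemma le_iff_sq_mul_sub_one_le {x t : ℝ} (hx : 1 < x) (ht : 0 ≤ t) :
    x ≤ t ↔ x ^ 2 * (x - 1) ≤ t ^ 2 * (t - 1) := by
  have hpos : 0 < t * (t + x - 1) + x * (x - 1) := by nlinarith
  have hfac : t ^ 2 * (t - 1) - x ^ 2 * (x - 1) = (t - x) * (t * (t + x - 1) + x * (x - 1)) := by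
    ring
  rw [← sub_nonneg, ← sub_nonneg (a := t ^ 2 * (t - 1)), hfac, mul_nonneg_iff_of_pos_right hpos]

lemma le_choose_two_mul_iff_friendshipRoot_le {n : ℕ} (hn : 1 ≤ n) (m : ℕ) :
    n ≤ m.choose 2 * m ↔ friendshipRoot n ≤ m := by
  obtain ⟨hx1, hx⟩ := friendshipRoot_spec (Nat.cast_nonneg n)
  have hx1' : 1 < friendshipRoot n := by
    by_contra! h
    have hn' : (1 : ℝ) ≤ n := by exact_mod_cast hn
    rw [le_antisymm h hx1] at hx
    linarith
  rw [le_iff_sq_mul_sub_one_le hx1' (Nat.cast_nonneg m), hx, ← Nat.cast_le (α := ℝ),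
    Nat.cast_mul, Nat.cast_choose_two]
  constructor <;> intro h <;> nlinarith

theorem distinguishingIndex_friendshipGraph (n : ℕ) (hn : 2 ≤ n) :
    (distinguishingIndex (friendshipGraph n) : ℤ) =
      ⌈(1 / 3 : ℝ) * (1 + 27 * (n : ℝ) + 3 * Real.sqrt (81 * (n : ℝ) ^ 2 + 6 * n)) ^ ((1 : ℝ) / 3)
        + 1 / (3 * (1 + 27 * (n : ℝ) + 3 * Real.sqrt (81 * (n : ℝ) ^ 2 + 6 * n)) ^ ((1 : ℝ) / 3))
        + 1 / 3⌉ := by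
  change _ = ⌈friendshipRoot n⌉
  have hcolorings : {d | ∃ c : Sym2 _ → Fin d, IsDistinguishingEdgeColoring (friendshipGraph n) c}
      = Set.Ici ⌈friendshipRoot n⌉₊ := by
    ext m
    rw [Set.mem_ofPred_eq, friendshipGraph.exists_isDistinguishingEdgeColoring_iff hn,
      le_choose_two_mul_iff_friendshipRoot_le (by omega), Set.mem_Ici, Nat.ceil_le]
  rw [distinguishingIndex_eq_sInf, hcolorings, csInf_Ici]
  exact Int.natCast_ceil_eq_ceil (zero_le_one.trans (friendshipRoot_spec (Nat.cast_nonneg n)).1)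
end
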